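/- arXiv:2203.11341 — 2 statements merged into one kernel-verified Lean document; each statement's English description precedes it below -/
import Mathlib

section
/- For any words r and q of equal combined role: if r·q·r·q is a factor of some power (q·r·r·q)^n, then r and q commute. -/
/-!
A factor of `w ^ n` of length `|w|` is a rotation of `w`, and every rotation of a square is a
square. So `q·r·r·q`, a rotation of `(r·q)²`, equals `v·v` for some `v`, and comparing halves
gives `q·r = v = r·q`.
-/

def wpow {α : Type*} (u : List α) (n : ℕ) : List α := (List.replicate n u).flatten

section wpow

variable {α : Type*}

theorem wpow_succ (w : List α) (n : ℕ) : wpow w (n + 1) = w ++ wpow w n := by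
  simp [wpow, List.replicate_succ]

theorem length_wpow (w : List α) (n : ℕ) : (wpow w n).length = n * w.length := by
  simp [wpow]

theorem getElem_wpow (w : List α) (n m : ℕ) (hm : m < (wpow w n).length) :
    (wpow w n)[m] = w[m % w.length]'(Nat.mod_lt _
      (Nat.pos_of_mul_pos_left (length_wpow w n ▸ Nat.zero_lt_of_lt hm))) := by
  induction n generalizing m with
  | zero => simp [wpow] at hm
  | succ n ih =>
    simp only [wpow_succ, List.getElem_append]
    split_ifs with h
    · simp [Nat.mod_eq_of_lt h]
    · rw [ih]
      simp only [Nat.mod_eq_sub_mod (Nat.le_of_not_lt h)]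

theorem List.IsInfix.isRotated_of_wpow {s w : List α} {n : ℕ} (h : s <:+: wpow w n)
    (hs : s.length = w.length) : s ~r w := by
  obtain ⟨p, t, hpt⟩ := h
  refine List.IsRotated.symm ⟨p.length, List.ext_getElem (by simp [hs]) fun i _ hi => ?_⟩
  have hs_i : s[i] = (wpow w n)[p.length + i]'(by rw [← hpt]; simp; omega) := by
    simp [← hpt, hi]
  rw [hs_i, getElem_wpow, List.getElem_rotate, Nat.add_comm]

end wpow

namespace List

variable {α : Type*}

theorem rotate_one_append_self (u : List α) : (u ++ u).rotate 1 = u.rotate 1 ++ u.rotate 1 := by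
  cases u <;> simp

theorem rotate_append_self (u : List α) (k : ℕ) :
    (u ++ u).rotate k = u.rotate k ++ u.rotate k := by
  induction k with
  | zero => simp
  | succ k ih => rw [← rotate_rotate, ih, rotate_one_append_self, rotate_rotate]

theorem IsRotated.exists_eq_append_self {l u : List α} (h : u ++ u ~r l) : ∃ v, l = v ++ v := by
  obtain ⟨k, rfl⟩ := h
  exact ⟨u.rotate k, rotate_append_self u k⟩

end List

/-- If `r·q·r·q` is a factor of some power of `q·r·r·q`, then `r` and `q` commute. -/
theorem rqrq_factor_qrrq {α : Type*} (r q : List α) (n : ℕ)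
    (h : r ++ q ++ r ++ q <:+: wpow (q ++ r ++ r ++ q) n) :
    r ++ q = q ++ r := by
  have hrot : (r ++ q) ++ (r ++ q) ~r (q ++ r) ++ (r ++ q) := by
    simpa only [List.append_assoc] using h.isRotated_of_wpow (by simp; omega)
  obtain ⟨v, hv⟩ := hrot.exists_eq_append_self
  have hlen : (q ++ r).length = v.length := by
    have := congrArg List.length hv
    simp only [List.length_append] at this ⊢
    omega
  obtain ⟨hqr, hrq⟩ := List.append_inj hv hlen
  rw [hqr, hrq]
end

section
/- Let x, y be non-commuting words with |y| ≤ |x|, both primitive, and not conjugate. Suppose p·(x·x)·s = x·y·x where p is a nonempty strict prefix of x and s a nonempty strict suffix of x, and this {x,y}-interpretation of x·x is disjoint and extendable. Then s·p = y and p·x = x·s. -/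
/-- Primitivity: nonempty and not a proper power. -/
def Prim {α : Type*} (w : List α) : Prop := w ≠ [] ∧ ∀ (t : List α) (k : ℕ), 2 ≤ k → w ≠ wpow t k

open List

section

variable {α : Type*}

theorem wpow_add (u : List α) (m n : ℕ) : wpow u (m + n) = wpow u m ++ wpow u n := by
  rw [wpow, wpow, wpow, replicate_add, flatten_append]

theorem wpow_one (u : List α) : wpow u 1 = u := by
  simp [wpow]

theorem reverse_wpow (u : List α) (k : ℕ) : (wpow u k).reverse = wpow u.reverse k := by
  simp [wpow, reverse_flatten, map_replicate]

theorem prefix_wpow (u : List α) {k : ℕ} (hk : 0 < k) : u <+: wpow u k := by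
  rw [← Nat.sub_add_cancel hk, add_comm, wpow_add, wpow_one]
  exact prefix_append _ _

theorem Prim.reverse {x : List α} (hx : Prim x) : Prim x.reverse :=
  ⟨by simpa using hx.1, fun t k hk h =>
    hx.2 t.reverse k hk (by rw [← reverse_wpow, ← h, reverse_reverse])⟩

namespace List

theorem length_eq_of_append_eq_append {x u v : List α} (h : u ++ x = x ++ v) :
    u.length = v.length := by
  have := congrArg length h
  simp only [length_append] at this
  omega

theorem prefix_of_append_eq_append {x u v : List α} (h : u ++ x = x ++ v)
    (hu : u.length ≤ x.length) : u <+: x :=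
  prefix_of_prefix_length_le (prefix_append u x) (h ▸ prefix_append x v) hu

theorem suffix_of_append_eq_append {x u v : List α} (h : u ++ x = x ++ v)
    (hv : v.length ≤ x.length) : v <:+ x :=
  suffix_of_suffix_length_le (suffix_append x v) (h ▸ suffix_append u x) hv

theorem exists_prefix_of_prefix_flatten {s : List α} {L : List (List α)} (hs : s ≠ [])
    (h : s <+: L.flatten) (hL : ∀ a ∈ L, s.length ≤ a.length) : ∃ a ∈ L, s <+: a := by
  cases L with
  | nil => exact absurd (prefix_nil.mp h) hs
  | cons a L =>
    exact ⟨a, mem_cons_self,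
      (isPrefix_append_of_length (hL a mem_cons_self)).mp (by simpa using h)⟩

theorem exists_suffix_of_suffix_flatten {s : List α} {L : List (List α)} (hs : s ≠ [])
    (h : s <:+ L.flatten) (hL : ∀ a ∈ L, s.length ≤ a.length) : ∃ a ∈ L, s <:+ a := by
  rcases eq_nil_or_concat L with rfl | ⟨L, a, rfl⟩
  · exact absurd (suffix_nil.mp h) hs
  · simp only [concat_eq_append, flatten_append, flatten_cons, flatten_nil, append_nil] at h
    exact ⟨a, by simp, suffix_of_suffix_length_le h (suffix_append _ _) (hL a (by simp))⟩

theorem hasPeriod_of_append_eq_append {x u v : List α} (h : u ++ x = x ++ v) :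
    x.HasPeriod u.length := by
  rcases le_or_gt u.length x.length with hl | hl
  · have hu : u = x.take u.length := prefix_iff_eq_take.mp (prefix_of_append_eq_append h hl)
    rw [HasPeriod, ← hu, h]
    exact prefix_append x v
  · exact hasPeriod_of_length_le x _ hl.le

theorem hasPeriod_of_take_eq_drop {x : List α} {d : ℕ} (h : x.take d = x.drop (x.length - d)) :
    x.HasPeriod (x.length - d) :=
  calc x = x.take (x.length - d) ++ x.drop (x.length - d) := (take_append_drop _ _).symm
    _ = x.take (x.length - d) ++ x.take d := by rw [h]
    _ <+: x.take (x.length - d) ++ x := (prefix_append_right_inj _).mpr (take_prefix d x)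

namespace HasPeriod

variable {x : List α} {d : ℕ}

theorem reverse (h : x.HasPeriod d) : x.reverse.HasPeriod d := by
  rw [hasPeriod_iff_getElem?] at h ⊢
  intro i hi
  rw [length_reverse] at hi
  have := h (x.length - 1 - (i + d)) (by omega)
  rw [getElem?_reverse (by omega), getElem?_reverse (by omega), this]
  congr 1
  omega

theorem drop_mul_prefix (h : x.HasPeriod d) (k : ℕ) : x.drop (d * k) <+: x := by
  induction k with
  | zero => simp
  | succ k ih =>
    rw [Nat.mul_succ, ← drop_drop]
    exact (ih.drop d).trans h.drop_prefix

theorem take_mul_eq_wpow (h : x.HasPeriod d) {k : ℕ} (hk : d * k ≤ x.length) :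
    x.take (d * k) = wpow (x.take d) k := by
  induction k with
  | zero => simp [wpow]
  | succ k ih =>
    rw [Nat.mul_succ] at hk ⊢
    rw [take_add, ih (by omega), wpow_add, wpow_one]
    congr 1
    exact ((h.drop_mul_prefix k).take d).eq_of_length
      (by simp only [length_take, length_drop]; omega)

theorem drop_mul_eq_wpow (h : x.HasPeriod d) {k : ℕ} (hk : d * k ≤ x.length) :
    x.drop (x.length - d * k) = wpow (x.drop (x.length - d)) k := by
  have := h.reverse.take_mul_eq_wpow (k := k) (by simpa using hk)
  rwa [take_reverse, take_reverse, ← reverse_wpow, reverse_inj] at this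

end HasPeriod

end List

theorem Prim.not_hasPeriod {x : List α} (hx : Prim x) {g : ℕ} (hg : g ∣ x.length) (hg0 : 0 < g)
    (hgx : g < x.length) : ¬ x.HasPeriod g := by
  intro h
  obtain ⟨k, hk⟩ := hg
  have hk2 : 2 ≤ k := by
    by_contra! hk1
    interval_cases k <;> omega
  exact hx.2 (x.take g) k hk2 (by rw [← h.take_mul_eq_wpow hk.ge, ← hk, take_length])

theorem Prim.take_ne_drop {x : List α} (hx : Prim x) {d : ℕ} (h : x.HasPeriod d) (hd0 : 0 < d)
    (hdx : d < x.length) : x.take d ≠ x.drop (x.length - d) := by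
  intro hzw
  have hg := h.gcd (hasPeriod_of_take_eq_drop hzw) (by omega)
  rw [Nat.gcd_sub_self_right hdx.le] at hg
  exact hx.not_hasPeriod (Nat.gcd_dvd_right _ _) (Nat.gcd_pos_of_pos_left _ hd0)
    ((Nat.gcd_le_left _ hd0).trans_lt hdx) hg

theorem exists_conj_of_interp {x y p s : List α} (heq : p ++ (x ++ x) ++ s = x ++ y ++ x) :
    ∃ t t', p ++ x = x ++ t ∧ t' ++ x = x ++ s ∧ y = t ++ t' := by
  have heq' : (p ++ x) ++ (x ++ s) = x ++ (y ++ x) := by simpa only [append_assoc] using heq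
  obtain ⟨t, ht⟩ : x <+: p ++ x :=
    prefix_of_prefix_length_le ⟨y ++ x, heq'.symm⟩ (prefix_append _ _) (by simp)
  obtain ⟨t', ht'⟩ : x <:+ x ++ s :=
    suffix_of_suffix_length_le ⟨x ++ y, (append_assoc _ _ _).trans heq'.symm⟩
      (suffix_append _ _) (by simp)
  refine ⟨t, t', ht.symm, ht', ?_⟩
  have hyt : x ++ (y ++ x) = x ++ ((t ++ t') ++ x) := by
    rw [← heq', ← ht, ← ht']
    simp only [append_assoc]
  exact append_cancel_right (append_cancel_left hyt)

theorem length_le_of_interp {x y p s : List α} (hx : Prim x)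
    (hlen : p.length + s.length ≤ x.length) (hp0 : p ≠ []) (hs0 : s ≠ [])
    (heq : p ++ (x ++ x) ++ s = x ++ y ++ x) (hsxy : s <+: x ∨ s <+: y) :
    s.length ≤ p.length := by
  obtain ⟨t, t', hpt, hst, rfl⟩ := exists_conj_of_interp heq
  have hta := (length_eq_of_append_eq_append hpt).symm
  have htb := length_eq_of_append_eq_append hst
  have hp := length_pos_iff.mpr hp0
  have hs := length_pos_iff.mpr hs0
  set d := p.length.gcd s.length
  have hper : x.HasPeriod d :=
    (hasPeriod_of_append_eq_append hpt).gcd (htb ▸ hasPeriod_of_append_eq_append hst) (by omega)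
  have hd0 : 0 < d := Nat.gcd_pos_of_pos_left _ hp
  have hdp : d ≤ p.length := Nat.le_of_dvd hp (Nat.gcd_dvd_left _ _)
  set z := x.take d
  set w := x.drop (x.length - d)
  have hzw : z ≠ w := hx.take_ne_drop hper hd0 (by omega)
  obtain ⟨A, hA⟩ : d ∣ p.length := Nat.gcd_dvd_left _ _
  obtain ⟨B, hB⟩ : d ∣ s.length := Nat.gcd_dvd_right _ _
  have ht'x : t' <+: x := prefix_of_append_eq_append hst (by omega)
  have ht : t = wpow w A := by
    rw [suffix_iff_eq_drop.mp (suffix_of_append_eq_append hpt (by omega)), hta, hA,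
      hper.drop_mul_eq_wpow (by omega)]
  have hs : s = wpow w B := by
    rw [suffix_iff_eq_drop.mp (suffix_of_append_eq_append hst (by omega)), hB,
      hper.drop_mul_eq_wpow (by omega)]
  have ht' : t' = wpow z B := by
    rw [prefix_iff_eq_take.mp ht'x, htb, hB, hper.take_mul_eq_wpow (by omega)]
  by_contra! hlt
  have hAB : A < B := by rw [hA, hB] at hlt; exact Nat.lt_of_mul_lt_mul_left hlt
  have hwz : w <+: wpow z B := by
    rcases hsxy with hsx | hsy
    · have hst' : s = t' :=
        (prefix_of_prefix_length_le hsx ht'x (by omega)).eq_of_length (by omega)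
      rw [← ht', ← hst', hs]
      exact prefix_wpow w (by omega)
    · have hsplit : wpow w B = wpow w A ++ wpow w (B - A) := by
        rw [← wpow_add, Nat.add_sub_cancel' hAB.le]
      rw [hs, ht, ht', hsplit, prefix_append_right_inj] at hsy
      exact (prefix_wpow w (by omega)).trans hsy
  have hlz : w.length ≤ z.length := by simp only [w, z, length_drop, length_take]; omega
  exact hzw ((prefix_of_prefix_length_le hwz (prefix_wpow z (by omega)) hlz).eq_of_length
    (by simp only [w, z, length_drop, length_take]; omega)).symm

theorem eq_of_interp_of_length_eq {x y p s : List α} (heq : p ++ (x ++ x) ++ s = x ++ y ++ x)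
    (hps : p.length = s.length) (hpx : p.length ≤ x.length) :
    s ++ p = y ∧ p ++ x = x ++ s := by
  obtain ⟨t, t', hpt, hst, rfl⟩ := exists_conj_of_interp heq
  have htb := length_eq_of_append_eq_append hst
  have hpt' : p = t' := (prefix_of_prefix_length_le (prefix_of_append_eq_append hpt hpx)
    (prefix_of_append_eq_append hst (by omega)) (by omega)).eq_of_length (by omega)
  subst hpt'
  obtain rfl : t = s := append_cancel_left (hpt.symm.trans hst)
  exact ⟨rfl, hpt⟩

end

theorem sq_ext_interp_general {α : Type*} (x y p s : List α)
    (hlen : y.length ≤ x.length)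
    (hx : Prim x)
    (heq : p ++ (x ++ x) ++ s = x ++ y ++ x)
    (hpne : p ≠ [])
    (hsne : s ≠ [])
    (hext : (∃ wp : List (List α), (∀ a ∈ wp, a = x ∨ a = y) ∧ p <:+ wp.flatten) ∧
            (∃ ws : List (List α), (∀ a ∈ ws, a = x ∨ a = y) ∧ s <+: ws.flatten)) :
    s ++ p = y ∧ p ++ x = x ++ s := by
  have hy : y.length = p.length + s.length := by
    have := congrArg length heq; simp only [length_append] at this; omega
  obtain ⟨⟨wp, hwp, hpwp⟩, ⟨ws, hws, hsws⟩⟩ := hext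
  have hsxy : s <+: x ∨ s <+: y := by
    obtain ⟨a, ha, hsa⟩ := exists_prefix_of_prefix_flatten hsne hsws fun a ha => by
      rcases hws a ha with rfl | rfl <;> omega
    rcases hws a ha with rfl | rfl
    exacts [.inl hsa, .inr hsa]
  have hpxy : p <:+ x ∨ p <:+ y := by
    obtain ⟨a, ha, hpa⟩ := exists_suffix_of_suffix_flatten hpne hpwp fun a ha => by
      rcases hwp a ha with rfl | rfl <;> omega
    rcases hwp a ha with rfl | rfl
    exacts [.inl hpa, .inr hpa]
  have hsp := length_le_of_interp hx (by omega) hpne hsne heq hsxy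
  have hps : p.length ≤ s.length := by
    simpa using length_le_of_interp hx.reverse (y := y.reverse) (p := s.reverse)
      (s := p.reverse) (by simp only [length_reverse]; omega) (by simpa) (by simpa)
      (by simpa using congrArg reverse heq) (by simpa using hpxy)
  exact eq_of_interp_of_length_eq heq (le_antisymm hps hsp) (by omega)

/-- The disjoint extendable `{x,y}`-interpretation `p (x·x) s ∼ [x,y,x]` of the square `x·x`
satisfies `s·p = y` and `p·x = x·s`. -/
theorem sq_ext_interp {α : Type*} (x y p s : List α)
    (hcomm : x ++ y ≠ y ++ x) (hlen : y.length ≤ x.length)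
    (hx : Prim x) (hy : Prim y)
    (hconj : ¬ ∃ r q : List α, x = r ++ q ∧ y = q ++ r)
    (heq : p ++ (x ++ x) ++ s = x ++ y ++ x)
    (hpne : p ≠ []) (hp : p <+: x ∧ p ≠ x)
    (hsne : s ≠ []) (hs : s <:+ x ∧ s ≠ x)
    (hdisj : ∀ w' u' : List (List α), w' <+: [x, y, x] → u' <+: [x, x] →
      w'.flatten ≠ p ++ u'.flatten)
    (hext : (∃ wp : List (List α), (∀ a ∈ wp, a = x ∨ a = y) ∧ p <:+ wp.flatten) ∧
            (∃ ws : List (List α), (∀ a ∈ ws, a = x ∨ a = y) ∧ s <+: ws.flatten)) :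
    s ++ p = y ∧ p ++ x = x ++ s :=
  sq_ext_interp_general x y p s hlen hx heq hpne hsne hext
end
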